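/- Let T_s > 0, let K_p, K_d be real numbers, and let f̄ ∈ (0,1]. Define the 2×2 real matrix A_cl(f̄) = [[1 − f̄ T_s² K_p / 2, T_s − f̄ T_s² K_d / 2], [−f̄ T_s K_p, 1 − f̄ T_s K_d]]. Then A_cl(f̄) is Schur stable (all eigenvalues have modulus strictly less than 1) if and only if the three inequalities f̄ T_s² K_p > 0, 2 − f̄ T_s K_d > 0, and K_d > (T_s/2) K_p all hold. -/

import Mathlib

open Matrix

/-- A real square matrix is Schur stable if every complex eigenvalue has modulus
strictly less than one. -/
def SchurStable {k : ℕ} (M : Matrix (Fin k) (Fin k) ℝ) : Prop :=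
  ∀ z ∈ spectrum ℂ (M.map Complex.ofReal), ‖z‖ < 1

/-- Frozen-gain closed-loop matrix of the sampled double integrator under the
scaled state feedback `u = -f̄ [K_p, K_d] x` with sampling time `T_s`. -/
noncomputable def Acl (Ts Kp Kd f : ℝ) : Matrix (Fin 2) (Fin 2) ℝ :=
  !![1 - f * Ts ^ 2 * Kp / 2, Ts - f * Ts ^ 2 * Kd / 2;
     -(f * Ts * Kp), 1 - f * Ts * Kd]

/-!
The eigenvalues of a real 2×2 matrix are the roots of `p(z) = z² - t z + d` (trace `t`,
determinant `d`), and they lie in the open unit disk iff `p(1) > 0`, `p(-1) > 0` and `|d| < 1`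
(Jury). If `p(±1) ≤ 0`, the parabola has a real root beyond `±1`, and `d` is the product of the
two roots. Conversely, a non-real root `z` has partner `conj z`, so `|z|² = d`; a real root `r`
has the real partner `w = t - r`, and `p(±1) = (1 ∓ r)(1 ∓ w) > 0` together with `|r w| < 1`
force `|r| < 1`. For `A_cl(f̄)`, `p(1) = f̄ T_s² K_p`, `p(-1) = 2 (2 - f̄ T_s K_d)` and
`1 - d = f̄ T_s (K_d - T_s K_p / 2)`, while `1 + d = (p(1) + p(-1)) / 2`.
-/

lemma mem_spectrum_map_ofReal_iff_fin_two (M : Matrix (Fin 2) (Fin 2) ℝ) (z : ℂ) :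
    z ∈ spectrum ℂ (M.map Complex.ofReal) ↔
      z ^ 2 - (M.trace : ℂ) * z + (M.det : ℂ) = 0 := by
  rw [spectrum.mem_iff, isUnit_iff_isUnit_det, isUnit_iff_ne_zero, not_not, det_fin_two,
    trace_fin_two, det_fin_two]
  refine Iff.of_eq (congrArg (· = 0) ?_)
  simp [algebraMap_matrix_apply]
  ring

lemma exists_root_ge_of_quadratic_nonpos {t d a : ℝ} (h : a ^ 2 - t * a + d ≤ 0) :
    ∃ r, a ≤ r ∧ r ^ 2 - t * r + d = 0 := by
  have hD : (2 * a - t) ^ 2 ≤ t ^ 2 - 4 * d := by linarith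
  refine ⟨(t + √(t ^ 2 - 4 * d)) / 2, ?_, ?_⟩
  · linarith [le_abs_self (2 * a - t), Real.abs_le_sqrt hD]
  · have := Real.sq_sqrt ((sq_nonneg _).trans hD)
    linear_combination this / 4

lemma quadratic_jury_of_roots_lt_one {t d : ℝ}
    (h : ∀ z : ℂ, z ^ 2 - (t : ℂ) * z + (d : ℂ) = 0 → ‖z‖ < 1) :
    0 < 1 - t + d ∧ 0 < 1 + t + d ∧ |d| < 1 := by
  have real_root_lt_one : ∀ r : ℝ, r ^ 2 - t * r + d = 0 → |r| < 1 := fun r hr => by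
    simpa using h r (by exact_mod_cast hr)
  refine ⟨?_, ?_, ?_⟩
  · by_contra! hp
    obtain ⟨r, hr1, hr⟩ := exists_root_ge_of_quadratic_nonpos (t := t) (d := d) (a := 1)
      (by linarith)
    linarith [le_abs_self r, real_root_lt_one r hr]
  · by_contra! hp
    obtain ⟨r, hr1, hr⟩ := exists_root_ge_of_quadratic_nonpos (t := -t) (d := d) (a := 1)
      (by linarith)
    linarith [neg_abs_le (-r), real_root_lt_one (-r) (by linear_combination hr)]
  · obtain ⟨s, hs⟩ := IsAlgClosed.exists_eq_mul_self ((t : ℂ) ^ 2 - 4 * d)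
    have hz := h ((t + s) / 2) (by linear_combination -hs / 4)
    have hw := h ((t - s) / 2) (by linear_combination -hs / 4)
    have hd : (d : ℂ) = (t + s) / 2 * ((t - s) / 2) := by linear_combination -hs / 4
    have : ‖(d : ℂ)‖ < 1 := by
      rw [hd, norm_mul]
      exact mul_lt_one_of_nonneg_of_lt_one_left (norm_nonneg _) hz hw.le
    simpa using this

lemma norm_lt_one_of_quadratic_jury {t d : ℝ} (h1 : 0 < 1 - t + d) (h2 : 0 < 1 + t + d)
    (hd : |d| < 1) {z : ℂ} (hz : z ^ 2 - (t : ℂ) * z + (d : ℂ) = 0) : ‖z‖ < 1 := by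
  have hconj : (starRingEnd ℂ z) ^ 2 - (t : ℂ) * starRingEnd ℂ z + (d : ℂ) = 0 := by
    simpa using congrArg (starRingEnd ℂ) hz
  have hsplit : (starRingEnd ℂ z - z) * (starRingEnd ℂ z - (t - z)) = 0 := by
    linear_combination hconj - hz
  rcases mul_eq_zero.1 hsplit with hreal | hpartner
  · obtain ⟨r, rfl⟩ := Complex.conj_eq_iff_real.1 (sub_eq_zero.1 hreal)
    have hr : r * (t - r) = d := by
      have : ((r * (t - r) : ℝ) : ℂ) = d := by push_cast; linear_combination -hz
      exact_mod_cast this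
    rw [Complex.norm_real, Real.norm_eq_abs]
    by_contra! hr1
    have hw : |t - r| < 1 := calc
      |t - r| ≤ |r| * |t - r| := le_mul_of_one_le_left (abs_nonneg _) hr1
      _ = |d| := by rw [← abs_mul, hr]
      _ < 1 := hd
    rw [abs_lt] at hw
    have hp1 : (1 - r) * (1 - (t - r)) = 1 - t + d := by linear_combination hr
    have hm1 : (1 + r) * (1 + (t - r)) = 1 + t + d := by linear_combination hr
    have : 0 < 1 - r := (pos_iff_pos_of_mul_pos (hp1 ▸ h1)).2 (by linarith)
    have : 0 < 1 + r := (pos_iff_pos_of_mul_pos (hm1 ▸ h2)).2 (by linarith)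
    exact hr1.not_gt (abs_lt.2 ⟨by linarith, by linarith⟩)
  · have hnorm : Complex.normSq z = d := by
      have : (Complex.normSq z : ℂ) = d := by
        rw [← Complex.mul_conj, sub_eq_zero.1 hpartner]
        linear_combination -hz
      exact_mod_cast this
    rw [← sq_lt_one_iff₀ (norm_nonneg z), ← Complex.normSq_eq_norm_sq, hnorm]
    exact (le_abs_self d).trans_lt hd

theorem quadratic_roots_lt_one_iff_jury (t d : ℝ) :
    (∀ z : ℂ, z ^ 2 - (t : ℂ) * z + (d : ℂ) = 0 → ‖z‖ < 1) ↔
      0 < 1 - t + d ∧ 0 < 1 + t + d ∧ |d| < 1 :=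
  ⟨quadratic_jury_of_roots_lt_one, fun ⟨h1, h2, hd⟩ _ hz =>
    norm_lt_one_of_quadratic_jury h1 h2 hd hz⟩

theorem schurStable_fin_two_iff (M : Matrix (Fin 2) (Fin 2) ℝ) :
    SchurStable M ↔ 0 < 1 - M.trace + M.det ∧ 0 < 1 + M.trace + M.det ∧ |M.det| < 1 := by
  simp only [SchurStable, mem_spectrum_map_ofReal_iff_fin_two]
  exact quadratic_roots_lt_one_iff_jury _ _

lemma trace_Acl (Ts Kp Kd f : ℝ) :
    (Acl Ts Kp Kd f).trace = 2 - f * Ts ^ 2 * Kp / 2 - f * Ts * Kd := by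
  rw [Acl, trace_fin_two_of]
  ring

lemma det_Acl (Ts Kp Kd f : ℝ) :
    (Acl Ts Kp Kd f).det = 1 - f * Ts * Kd + f * Ts ^ 2 * Kp / 2 := by
  rw [Acl, det_fin_two_of]
  ring

/-- Jury-criterion characterization: `A_cl(f̄)` is Schur stable if and only if
`f̄ T_s² K_p > 0`, `2 - f̄ T_s K_d > 0`, and `K_d > (T_s / 2) K_p`. -/
theorem frozen_gain_schur_stable_iff (Ts Kp Kd : ℝ) (hTs : 0 < Ts)
    (f : ℝ) (hf : f ∈ Set.Ioc (0 : ℝ) 1) :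
    SchurStable (Acl Ts Kp Kd f) ↔
      (0 < f * Ts ^ 2 * Kp ∧ 0 < 2 - f * Ts * Kd ∧ Ts / 2 * Kp < Kd) := by
  have hfTs : 0 < f * Ts := mul_pos hf.1 hTs
  rw [schurStable_fin_two_iff, trace_Acl, det_Acl, abs_lt]
  constructor
  · rintro ⟨h1, h2, -, hd⟩
    refine ⟨by linarith, by linarith, lt_of_mul_lt_mul_left ?_ hfTs.le⟩
    linarith
  · rintro ⟨h1, h2, h3⟩
    have := mul_lt_mul_of_pos_left h3 hfTs
    exact ⟨by linarith, by linarith, by linarith, by linarith⟩
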